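/- arXiv:math/0001074 — 4 statements merged into one kernel-verified Lean document; each statement's English description precedes it below -/
import Mathlib

section
/- Let X be a countable discrete metric space. If there exists a sequence of positive definite functions in C₀(X×X;Δ) which forms an approximate unit for C₀(X×X;Δ), then there exists a metrically proper negative type function on X × X. -/
open scoped ComplexConjugate ComplexOrder

/-- `f : X × X → ℂ` is positive definite. -/
def IsPositiveDefinite {X : Type*} (f : X → X → ℂ) : Prop :=
  ∀ (n : ℕ) (x : Fin n → X) (z : Fin n → ℂ),
    0 ≤ ∑ i, ∑ j, conj (z i) * f (x i) (x j) * z j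

/-- `h : X × X → ℝ` is of negative type. -/
def IsNegativeType {X : Type*} (h : X → X → ℝ) : Prop :=
  (∀ x, h x x = 0) ∧ (∀ x y, h x y = h y x) ∧
    ∀ (n : ℕ) (x : Fin n → X) (a : Fin n → ℝ),
      (∑ j, a j) = 0 → (∑ i, ∑ j, a i * h (x i) (x j) * a j) ≤ 0

/-- `f` is metrically proper with respect to the distance function `d`. -/
def MetricallyProperWith {X E : Type*} [Norm E] (d : X → X → ℝ) (f : X → X → E) : Prop :=
  ∀ C > 0, ∃ R > 0, ∀ x y, d x y > R → C < ‖f x y‖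

/-- `f` belongs to `C₀(X×X; Δ)`: it is bounded and tends to zero away from the diagonal. -/
def MemC0Delta {X : Type*} (d : X → X → ℝ) (f : X → X → ℂ) : Prop :=
  (∃ M, ∀ x y, ‖f x y‖ ≤ M) ∧
    ∀ ε > 0, ∃ R > 0, ∀ x y, d x y > R → ‖f x y‖ < ε

/-- The sequence `u` consists of elements of `C₀(X×X; Δ)` and is an approximate unit for it:
`‖u n · f − f‖_∞ → 0` for every `f ∈ C₀(X×X; Δ)`. -/
def IsApproximateUnit {X : Type*} (d : X → X → ℝ) (u : ℕ → X → X → ℂ) : Prop :=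
  (∀ n, MemC0Delta d (u n)) ∧
    ∀ f, MemC0Delta d f → ∀ ε > 0, ∃ N, ∀ n ≥ N, ∀ x y, ‖u n x y * f x y - f x y‖ < ε

/-!
For positive definite `φ`, the real part of `φ(x,x) + φ(y,y) - φ(x,y) - φ(y,x)` is a nonnegative
kernel of negative type (the easy half of Schoenberg's theorem). Testing the approximate unit
against the indicator of `{d ≤ k}` gives positive definite `φₖ ∈ C₀(X×X; Δ)` with
`‖φₖ - 1‖ < 4⁻⁽ᵏ⁺¹⁾` on `{d ≤ k}`, so these kernels are summable and their sum is of negative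
type. Beyond the radii where `|φ₀|, …, |φₘ₋₁| < 1/4`, each of the first `m` kernels is at least
`1`, so the sum exceeds `m`.
-/

open Finset

def negTypeOfPosDef {X : Type*} (f : X → X → ℂ) (x y : X) : ℝ :=
  (f x x + f y y - f x y - f y x).re

section Kernel

variable {X : Type*} {f : X → X → ℂ}

lemma negTypeOfPosDef_self (x : X) : negTypeOfPosDef f x x = 0 := by
  simp [negTypeOfPosDef]

lemma negTypeOfPosDef_comm (x y : X) : negTypeOfPosDef f x y = negTypeOfPosDef f y x := by
  unfold negTypeOfPosDef; ring_nf

lemma IsPositiveDefinite.sum_re_nonneg (hf : IsPositiveDefinite f) (n : ℕ) (x : Fin n → X)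
    (a : Fin n → ℝ) : 0 ≤ ∑ i, ∑ j, a i * (f (x i) (x j)).re * a j := by
  have h := (Complex.le_def.1 (hf n x fun i => (a i : ℂ))).1
  simpa [Complex.re_sum, Complex.mul_re] using h

lemma IsPositiveDefinite.negTypeOfPosDef_nonneg (hf : IsPositiveDefinite f) (x y : X) :
    0 ≤ negTypeOfPosDef f x y := by
  have h := hf.sum_re_nonneg 2 ![x, y] ![1, -1]
  simp only [Fin.sum_univ_two, Matrix.cons_val_zero, Matrix.cons_val_one,
    Matrix.cons_val_fin_one, mul_one, one_mul, mul_neg, neg_mul, neg_neg] at h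
  simp only [negTypeOfPosDef, Complex.sub_re, Complex.add_re]
  linarith

lemma IsPositiveDefinite.isNegativeType_negTypeOfPosDef (hf : IsPositiveDefinite f) :
    IsNegativeType (negTypeOfPosDef f) := by
  refine ⟨negTypeOfPosDef_self, negTypeOfPosDef_comm, fun n x a ha => ?_⟩
  set g : Fin n → Fin n → ℝ := fun i j => (f (x i) (x j)).re
  -- the diagonal terms are killed by `∑ a = 0`, the two off-diagonal ones are equal
  have hdiag : ∑ i, ∑ j, a i * (g i i + g j j) * a j = 0 := by
    simp only [mul_add, add_mul, sum_add_distrib, ← sum_mul, ← mul_sum, mul_assoc, ha, mul_zero,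
      zero_mul, sum_const_zero, add_zero]
  have hswap : ∑ i, ∑ j, a i * g j i * a j = ∑ i, ∑ j, a i * g i j * a j := by
    rw [sum_comm]; exact sum_congr rfl fun _ _ => sum_congr rfl fun _ _ => by ring
  calc ∑ i, ∑ j, a i * negTypeOfPosDef f (x i) (x j) * a j
      = ∑ i, ∑ j, a i * (g i i + g j j) * a j - ∑ i, ∑ j, a i * g i j * a j
          - ∑ i, ∑ j, a i * g j i * a j := by
        simp only [← sum_sub_distrib]
        exact sum_congr rfl fun _ _ => sum_congr rfl fun _ _ => by
          simp only [negTypeOfPosDef, g, Complex.sub_re, Complex.add_re]; ring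
    _ ≤ 0 := by rw [hdiag, hswap]; linarith [hf.sum_re_nonneg n x a]

lemma abs_negTypeOfPosDef_le {x y : X} {ε : ℝ} (hx : ‖f x x - 1‖ ≤ ε) (hy : ‖f y y - 1‖ ≤ ε)
    (hxy : ‖f x y - 1‖ ≤ ε) (hyx : ‖f y x - 1‖ ≤ ε) : |negTypeOfPosDef f x y| ≤ 4 * ε := by
  calc |negTypeOfPosDef f x y|
      ≤ ‖(f x x - 1) + (f y y - 1) - (f x y - 1) - (f y x - 1)‖ := by
        unfold negTypeOfPosDef; ring_nf; exact Complex.abs_re_le_norm _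
    _ ≤ 4 * ε := by
        have h₁ := norm_sub_le ((f x x - 1) + (f y y - 1) - (f x y - 1)) (f y x - 1)
        have h₂ := norm_sub_le ((f x x - 1) + (f y y - 1)) (f x y - 1)
        have h₃ := norm_add_le (f x x - 1) (f y y - 1)
        linarith

lemma one_le_negTypeOfPosDef {x y : X} (hx : ‖f x x - 1‖ ≤ 1 / 4) (hy : ‖f y y - 1‖ ≤ 1 / 4)
    (hxy : ‖f x y‖ ≤ 1 / 4) (hyx : ‖f y x‖ ≤ 1 / 4) : 1 ≤ negTypeOfPosDef f x y := by
  have hx' := (Complex.abs_re_le_norm (f x x - 1)).trans hx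
  have hy' := (Complex.abs_re_le_norm (f y y - 1)).trans hy
  have hxy' := (Complex.re_le_norm (f x y)).trans hxy
  have hyx' := (Complex.re_le_norm (f y x)).trans hyx
  simp only [Complex.sub_re, Complex.one_re, abs_le] at hx' hy'
  simp only [negTypeOfPosDef, Complex.sub_re, Complex.add_re]
  linarith [hx'.1, hy'.1]

end Kernel

lemma IsNegativeType.tsum {X ι : Type*} {h : ι → X → X → ℝ} (hh : ∀ k, IsNegativeType (h k))
    (hs : ∀ x y, Summable fun k => h k x y) : IsNegativeType fun x y => ∑' k, h k x y := by
  refine ⟨fun x => by simp [(hh _).1], fun x y => tsum_congr fun k => (hh k).2.1 x y,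
    fun n x a ha => ?_⟩
  have hsum : HasSum (fun k => ∑ i, ∑ j, a i * h k (x i) (x j) * a j)
      (∑ i, ∑ j, a i * (∑' k, h k (x i) (x j)) * a j) :=
    hasSum_sum fun i _ => hasSum_sum fun j _ =>
      ((hs (x i) (x j)).hasSum.mul_left (a i)).mul_right (a j)
  exact hsum.nonpos fun k => (hh k).2.2 n x a ha

lemma memC0Delta_indicator_le {X : Type*} (d : X → X → ℝ) (R : ℝ) :
    MemC0Delta d fun x y => if d x y ≤ R then 1 else 0 := by
  refine ⟨⟨1, fun x y => by dsimp only; split_ifs <;> simp⟩, fun ε hε => ⟨max R 1, by positivity,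
    fun x y hxy => ?_⟩⟩
  have hR : ¬d x y ≤ R := by linarith [le_max_left R 1]
  simpa [hR] using hε

lemma IsApproximateUnit.exists_norm_sub_one_lt {X : Type*} {d : X → X → ℝ}
    {u : ℕ → X → X → ℂ} (hu : IsApproximateUnit d u) (R : ℝ) {ε : ℝ} (hε : 0 < ε) :
    ∃ n, ∀ x y, d x y ≤ R → ‖u n x y - 1‖ < ε := by
  obtain ⟨N, hN⟩ := hu.2 _ (memC0Delta_indicator_le d R) ε hε
  exact ⟨N, fun x y hxy => by simpa [if_pos hxy] using hN N le_rfl x y⟩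

section Sequence

variable {X : Type*} [PseudoMetricSpace X] {φ : ℕ → X → X → ℂ}

lemma summable_negTypeOfPosDef
    (hnear : ∀ (k : ℕ) x y, dist x y ≤ k → ‖φ k x y - 1‖ < (1 / 4) ^ (k + 1)) (x y : X) :
    Summable fun k => negTypeOfPosDef (φ k) x y := by
  refine Summable.of_norm_bounded_eventually_nat (summable_geometric_of_lt_one
    (by norm_num : (0 : ℝ) ≤ 1 / 4) (by norm_num)) ?_
  filter_upwards [Filter.eventually_ge_atTop ⌈dist x y⌉₊] with k hk
  have hxy : dist x y ≤ k := Nat.ceil_le.1 hk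
  have hself : ∀ z : X, dist z z ≤ k := fun z => by simp
  rw [Real.norm_eq_abs, show (1 / 4 : ℝ) ^ k = 4 * (1 / 4) ^ (k + 1) by ring]
  exact abs_negTypeOfPosDef_le (hnear k x x (hself x)).le (hnear k y y (hself y)).le
    (hnear k x y hxy).le (hnear k y x (dist_comm x y ▸ hxy)).le

lemma metricallyProperWith_tsum_negTypeOfPosDef (hpd : ∀ k, IsPositiveDefinite (φ k))
    (hC0 : ∀ k, MemC0Delta dist (φ k))
    (hnear : ∀ (k : ℕ) x y, dist x y ≤ k → ‖φ k x y - 1‖ < (1 / 4) ^ (k + 1)) :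
    MetricallyProperWith dist fun x y => ∑' k, negTypeOfPosDef (φ k) x y := by
  choose R hRpos hR using fun k => (hC0 k).2 (1 / 4) (by norm_num)
  intro C _
  set m := ⌊C⌋₊ + 1
  refine ⟨∑ k ∈ range m, R k, sum_pos (fun k _ => hRpos k) nonempty_range_add_one,
    fun x y hxy => ?_⟩
  have hfar : ∀ k ∈ range m, R k < dist x y := fun k hk =>
    (single_le_sum (fun k _ => (hRpos k).le) hk).trans_lt hxy
  have hdiag : ∀ k z, ‖φ k z z - 1‖ ≤ 1 / 4 := fun k z =>
    (hnear k z z (by simp)).le.trans (pow_le_of_le_one (by norm_num) (by norm_num) k.succ_ne_zero)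
  calc C < m := by simpa [m] using Nat.lt_floor_add_one C
    _ = ∑ k ∈ range m, (1 : ℝ) := by simp
    _ ≤ ∑ k ∈ range m, negTypeOfPosDef (φ k) x y := sum_le_sum fun k hk =>
        one_le_negTypeOfPosDef (hdiag k x) (hdiag k y) (hR k x y (hfar k hk)).le
          (hR k y x (dist_comm x y ▸ hfar k hk)).le
    _ ≤ ∑' k, negTypeOfPosDef (φ k) x y :=
        (summable_negTypeOfPosDef hnear x y).sum_le_tsum _
          fun k _ => (hpd k).negTypeOfPosDef_nonneg x y
    _ ≤ _ := Real.le_norm_self _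

end Sequence

theorem proper_negative_type_of_approximate_unit_of_posdef_general
    (X : Type*) [MetricSpace X]
    (u : ℕ → X → X → ℂ) (hpd : ∀ n, IsPositiveDefinite (u n))
    (hau : IsApproximateUnit dist u) :
    ∃ h : X → X → ℝ, IsNegativeType h ∧ MetricallyProperWith dist h := by
  choose ν hν using fun k : ℕ =>
    hau.exists_norm_sub_one_lt k (by positivity : (0 : ℝ) < (1 / 4) ^ (k + 1))
  exact ⟨_, IsNegativeType.tsum (fun k => (hpd (ν k)).isNegativeType_negTypeOfPosDef)
      (summable_negTypeOfPosDef hν),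
    metricallyProperWith_tsum_negTypeOfPosDef (fun k => hpd (ν k)) (fun k => hau.1 (ν k)) hν⟩

theorem proper_negative_type_of_approximate_unit_of_posdef
    (X : Type*) [MetricSpace X] [DiscreteTopology X] [Countable X]
    (u : ℕ → X → X → ℂ) (hpd : ∀ n, IsPositiveDefinite (u n))
    (hau : IsApproximateUnit dist u) :
    ∃ h : X → X → ℝ, IsNegativeType h ∧ MetricallyProperWith dist h :=
  proper_negative_type_of_approximate_unit_of_posdef_general X u hpd hau
end

section
/- Let X be a discrete metric space and let (u_n) be a sequence of functions X × X → ℂ which is uniformly bounded (there is M with |u_n(x,y)| ≤ M for all n, x, y). Then ‖u_n·f − f‖_∞ → 0 for every f ∈ C₀(X×X;Δ) if and only if u_n converges to the constant function 1 uniformly on B_Δ(R) for every R > 0. -/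
open scoped ComplexConjugate ComplexOrder

section C0Delta

variable {X : Type*}

def TendstoUniformlyOneNearDiagonal (d : X → X → ℝ) (u : ℕ → X → X → ℂ) : Prop :=
  ∀ R > 0, ∀ ε > 0, ∃ N, ∀ n ≥ N, ∀ x y, d x y < R → ‖u n x y - 1‖ < ε

def TendstoUniformlyMulSelfOnC0Delta (d : X → X → ℝ) (u : ℕ → X → X → ℂ) : Prop :=
  ∀ f, MemC0Delta d f → ∀ ε > 0, ∃ N, ∀ n ≥ N, ∀ x y, ‖u n x y * f x y - f x y‖ < ε

variable {d : X → X → ℝ}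

theorem MemC0Delta.exists_pos_bound {f : X → X → ℂ} (hf : MemC0Delta d f) :
    ∃ K > 0, ∀ x y, ‖f x y‖ ≤ K := by
  obtain ⟨⟨K, hK⟩, -⟩ := hf
  exact ⟨max K 1, by positivity, fun x y => (hK x y).trans (le_max_left K 1)⟩

noncomputable def bandIndicator (d : X → X → ℝ) (R : ℝ) (x y : X) : ℂ :=
  if d x y < R then 1 else 0

theorem memC0Delta_bandIndicator {R : ℝ} (hR : 0 < R) : MemC0Delta d (bandIndicator d R) := by
  refine ⟨⟨1, fun x y => ?_⟩, fun ε hε => ⟨R, hR, fun x y hxy => ?_⟩⟩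
  · unfold bandIndicator
    split_ifs <;> simp
  · simpa [bandIndicator, hxy.not_gt] using hε

theorem TendstoUniformlyMulSelfOnC0Delta.tendstoUniformlyOneNearDiagonal
    {u : ℕ → X → X → ℂ} (h : TendstoUniformlyMulSelfOnC0Delta d u) :
    TendstoUniformlyOneNearDiagonal d u := by
  intro R hR ε hε
  obtain ⟨N, hN⟩ := h _ (memC0Delta_bandIndicator hR) ε hε
  refine ⟨N, fun n hn x y hxy => ?_⟩
  simpa [bandIndicator, hxy] using hN n hn x y

/-- Near the diagonal `u n - 1` is small and `f` is bounded; far from it `u n - 1` is bounded and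
`f` is small. -/
theorem TendstoUniformlyOneNearDiagonal.tendstoUniformlyMulSelfOnC0Delta
    {u : ℕ → X → X → ℂ} {M : ℝ} (hM : ∀ n x y, ‖u n x y‖ ≤ M)
    (h : TendstoUniformlyOneNearDiagonal d u) : TendstoUniformlyMulSelfOnC0Delta d u := by
  intro f hf ε hε
  obtain ⟨K, hK, hfK⟩ := hf.exists_pos_bound
  let C := |M| + 1
  have hC : 0 < C := by positivity
  have hu : ∀ n x y, ‖u n x y - 1‖ ≤ C := fun n x y =>
    (norm_sub_le _ _).trans (by rw [norm_one]; linarith [hM n x y, le_abs_self M])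
  obtain ⟨R, hR, hfar⟩ := hf.2 (ε / C) (by positivity)
  obtain ⟨N, hN⟩ := h (R + 1) (by linarith) (ε / K) (by positivity)
  refine ⟨N, fun n hn x y => ?_⟩
  rw [← sub_one_mul, norm_mul]
  by_cases hxy : d x y < R + 1
  · exact (mul_le_mul_of_nonneg_left (hfK x y) (norm_nonneg _)).trans_lt
      ((lt_div_iff₀ hK).1 (hN n hn x y hxy))
  · rw [mul_comm]
    exact (mul_le_mul_of_nonneg_left (hu n x y) (norm_nonneg _)).trans_lt
      ((lt_div_iff₀ hC).1 (hfar x y (by linarith)))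

end C0Delta

theorem approximate_unit_iff_uniform_convergence_near_diagonal_general
    (X : Type*) [MetricSpace X]
    (u : ℕ → X → X → ℂ) (M : ℝ) (hM : ∀ n x y, ‖u n x y‖ ≤ M) :
    (∀ f, MemC0Delta dist f → ∀ ε > 0, ∃ N, ∀ n ≥ N, ∀ x y : X,
        ‖u n x y * f x y - f x y‖ < ε) ↔
      (∀ R > 0, ∀ ε > 0, ∃ N, ∀ n ≥ N, ∀ x y : X, dist x y < R → ‖u n x y - 1‖ < ε) :=
  ⟨TendstoUniformlyMulSelfOnC0Delta.tendstoUniformlyOneNearDiagonal,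
    TendstoUniformlyOneNearDiagonal.tendstoUniformlyMulSelfOnC0Delta hM⟩

theorem approximate_unit_iff_uniform_convergence_near_diagonal
    (X : Type*) [MetricSpace X] [DiscreteTopology X]
    (u : ℕ → X → X → ℂ) (M : ℝ) (hM : ∀ n x y, ‖u n x y‖ ≤ M) :
    (∀ f, MemC0Delta dist f → ∀ ε > 0, ∃ N, ∀ n ≥ N, ∀ x y : X,
        ‖u n x y * f x y - f x y‖ < ε) ↔
      (∀ R > 0, ∀ ε > 0, ∃ N, ∀ n ≥ N, ∀ x y : X, dist x y < R → ‖u n x y - 1‖ < ε) :=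
  approximate_unit_iff_uniform_convergence_near_diagonal_general X u M hM
end

section
/- Let Γ be a group, λ its left regular representation on ℓ²(Γ), and C*_r(Γ) the reduced group C*-algebra, realized as the operator-norm closure in B(ℓ²(Γ)) of the *-subalgebra generated by {λ(g) : g ∈ Γ}. If T : C*_r(Γ) → B(ℓ²(Γ)) is a unital completely positive linear map, then the function u_T : Γ × Γ → ℂ defined by u_T(s,t) = ⟨δ_s, T(λ(s·t⁻¹)) δ_t⟩ is positive definite. -/
noncomputable section

open scoped ComplexConjugate ComplexOrder ENNReal

/-- `ℓ²(Γ)`, the Hilbert space of square-summable families of complex numbers indexed by `Γ`. -/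
abbrev L2 (Γ : Type*) : Type _ := lp (fun _ : Γ => ℂ) 2

/-- The standard orthonormal basis vector `δ_t` of `ℓ²(Γ)`. -/
def dirac {Γ : Type*} (t : Γ) : L2 Γ :=
  letI := Classical.decEq Γ
  lp.single 2 t 1

lemma memℓp_translate {Γ : Type*} [Group Γ] (g : Γ) (f : L2 Γ) :
    Memℓp (fun s => f (g⁻¹ * s)) (2 : ℝ≥0∞) :=
  memℓp_gen (by
    simpa [Function.comp_def] using ((Equiv.mulLeft g⁻¹).summable_iff
      (f := fun s => ‖f s‖ ^ (2 : ℝ≥0∞).toReal)).2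
      ((memℓp_gen_iff (by norm_num)).1 (lp.memℓp f)))

/-- The left regular representation of `Γ` on `ℓ²(Γ)`, as a linear isometric bijection:
`(lamE g f) s = f (g⁻¹ s)`, so that `lamE g (dirac t) = dirac (g * t)`. -/
def lamE {Γ : Type*} [Group Γ] (g : Γ) : L2 Γ ≃ₗᵢ[ℂ] L2 Γ where
  toFun f := ⟨fun s => f (g⁻¹ * s), memℓp_translate g f⟩
  invFun f := ⟨fun s => f (g * s), by
    have h := memℓp_translate g⁻¹ f
    simp only [inv_inv] at h
    exact h⟩
  map_add' f₁ f₂ := by ext s; simp [lp.coeFn_add, Pi.add_apply]; rfl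
  map_smul' c f := by ext s; simp [lp.coeFn_smul, Pi.smul_apply]
  left_inv f := by ext s; simp
  right_inv f := by ext s; simp
  norm_map' f := by
    rw [lp.norm_eq_tsum_rpow (by norm_num) _, lp.norm_eq_tsum_rpow (by norm_num) f]
    congr 1
    simpa using (Equiv.mulLeft g⁻¹).tsum_eq (f := fun s => ‖f s‖ ^ (2 : ℝ≥0∞).toReal)

/-- The left regular representation as bounded operators on `ℓ²(Γ)`. -/
def lam {Γ : Type*} [Group Γ] (g : Γ) : L2 Γ →L[ℂ] L2 Γ :=
  (lamE g).toLinearIsometry.toContinuousLinearMap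

/-- The reduced group C*-algebra of `Γ`: the operator-norm closure in `B(ℓ²(Γ))` of the
*-subalgebra generated by the operators of the left regular representation. -/
def reducedGroupCstar (Γ : Type*) [Group Γ] : StarSubalgebra ℂ (L2 Γ →L[ℂ] L2 Γ) :=
  (StarAlgebra.adjoin ℂ (Set.range (lam (Γ := Γ)))).topologicalClosure

lemma lam_mem_reducedGroupCstar {Γ : Type*} [Group Γ] (g : Γ) :
    lam g ∈ reducedGroupCstar Γ :=
  (StarAlgebra.adjoin ℂ (Set.range (lam (Γ := Γ)))).le_topologicalClosure
    (StarAlgebra.subset_adjoin ℂ _ ⟨g, rfl⟩)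

/-- The operator `λ(g)` as an element of the reduced group C*-algebra. -/
def lamRed {Γ : Type*} [Group Γ] (g : Γ) : reducedGroupCstar Γ :=
  ⟨lam g, lam_mem_reducedGroupCstar g⟩
/-- The `n × n` operator matrix `A` defines a positive operator on the `n`-fold Hilbert space
direct sum: the associated quadratic form `Σ_{i,j} ⟨v_j, A_{ij} v_i⟩` is nonnegative. -/
def MatrixPositive {H : Type*} [NormedAddCommGroup H] [InnerProductSpace ℂ H]
    {n : ℕ} (A : Fin n → Fin n → (H →L[ℂ] H)) : Prop :=
  ∀ v : Fin n → H, 0 ≤ ∑ i, ∑ j, (inner ℂ (v j) (A i j (v i)) : ℂ)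
/-- `T` is a unital completely positive map from the reduced group C*-algebra into
`B(ℓ²(Γ))`. -/
def IsUCP {Γ : Type*} [Group Γ]
    (T : reducedGroupCstar Γ →ₗ[ℂ] (L2 Γ →L[ℂ] L2 Γ)) : Prop :=
  T 1 = 1 ∧
    ∀ (n : ℕ) (A : Fin n → Fin n → reducedGroupCstar Γ),
      MatrixPositive (fun i j => (A i j : L2 Γ →L[ℂ] L2 Γ)) →
        MatrixPositive (fun i j => T (A i j))

/-- The matrix coefficient function `u_T (s,t) = ⟨δ_s, T(λ(s t⁻¹)) δ_t⟩` associated to a map `T`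
defined on the reduced group C*-algebra. -/
def matrixCoeff {Γ : Type*} [Group Γ]
    (T : reducedGroupCstar Γ → (L2 Γ →L[ℂ] L2 Γ)) (s t : Γ) : ℂ :=
  inner ℂ (dirac s) ((T (lamRed (s * t⁻¹))) (dirac t))

/-! With `W i = λ(s_i⁻¹)` the operator matrix `[λ(s_j s_i⁻¹)]` is `[W_j* W_i]`, whose quadratic form
at `v` is `‖Σ W_i v_i‖² ≥ 0`. Complete positivity of `T` makes `[T(λ(s_j s_i⁻¹))]` positive too,
and its quadratic form at `v_i = z_i δ_{s_i}` is `Σ conj(z_i) z_j u_T(s_i, s_j)`. -/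

open ContinuousLinearMap in
theorem matrixPositive_adjoint_comp {H K : Type*} [NormedAddCommGroup H] [InnerProductSpace ℂ H]
    [CompleteSpace H] [NormedAddCommGroup K] [InnerProductSpace ℂ K] [CompleteSpace K] {n : ℕ}
    (W : Fin n → H →L[ℂ] K) :
    MatrixPositive (fun i j => adjoint (W j) ∘L W i) := by
  intro v
  calc (0 : ℂ) ≤ inner ℂ (∑ j, W j (v j)) (∑ i, W i (v i)) := by
        rw [inner_self_eq_norm_sq_to_K]; positivity
    _ = _ := by
        rw [inner_sum]
        simp_rw [sum_inner, coe_comp, Function.comp_apply, adjoint_inner_right]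

theorem lam_mul {Γ : Type*} [Group Γ] (g h : Γ) : lam (g * h) = lam g * lam h := by
  ext v s
  simp [lam, lamE, mul_assoc]

theorem adjoint_lam {Γ : Type*} [Group Γ] (g : Γ) :
    ContinuousLinearMap.adjoint (lam g) = lam g⁻¹ := by
  refine (lamE g).adjoint_eq_symm.trans ?_
  ext v s
  exact congrArg v (by rw [inv_inv])

theorem matrixPositive_lam {Γ : Type*} [Group Γ] {n : ℕ} (s : Fin n → Γ) :
    MatrixPositive (fun i j => lam (s j * (s i)⁻¹)) := by
  simpa only [adjoint_lam, inv_inv, lam_mul, ContinuousLinearMap.mul_def] using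
    matrixPositive_adjoint_comp (fun i => lam (s i)⁻¹)

theorem matrixCoeff_posdef_of_ucp {Γ : Type*} [Group Γ]
    (T : reducedGroupCstar Γ →ₗ[ℂ] (L2 Γ →L[ℂ] L2 Γ)) (hT : IsUCP T) :
    IsPositiveDefinite (matrixCoeff (fun a => T a)) := by
  intro n s z
  have hpos := hT.2 n (fun i j => lamRed (s j * (s i)⁻¹)) (matrixPositive_lam s)
    (fun i => z i • dirac (s i))
  rw [Finset.sum_comm]
  simpa only [map_smul, inner_smul_left, inner_smul_right, matrixCoeff, mul_comm, mul_left_comm]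
    using hpos
end
end

section
/- Let Γ be a group and βΓ the Stone–Čech compactification of the discrete space Γ, with the extended right translation action of Γ. Let f : Γ × Γ → ℂ be a function such that s ↦ f(s, s·t) is bounded for each fixed t ∈ Γ, and let α*(f) : βΓ × Γ → ℂ be defined by letting α*(f)(·, t) be the continuous extension to βΓ of s ↦ f(s, s·t). If f is positive definite on Γ × Γ, then α*(f) is positive definite on the groupoid βΓ⋊Γ: for every x ∈ βΓ, s_1, …, s_n ∈ Γ and z_1, …, z_n ∈ ℂ, the sum Σ_{i,j} conj(z_i)·α*(f)(x·s_i, s_i⁻¹·s_j)·z_j is a nonnegative real number. -/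
/-!
The groupoid sum at `x ∈ βΓ` depends continuously on `x`, and nonnegative complex numbers form
a closed set, so it suffices to check nonnegativity at the dense set of points `ι(a)`. There
`α*(f)(ι(a)·sᵢ, sᵢ⁻¹sⱼ) = f(a sᵢ, a sⱼ)`, and the sum is the positive definiteness sum of `f` at
the points `a s₁, …, a sₙ`.
-/

noncomputable section

open scoped ComplexConjugate ComplexOrder

/-- Right translation by `t ∈ Γ` on the Stone–Čech compactification of the discrete space `Γ`:
the continuous extension of `s ↦ ι(s·t)`. -/
def rightTranslate {Γ : Type*} [Group Γ] [TopologicalSpace Γ] [DiscreteTopology Γ] (t : Γ)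
    (x : StoneCech Γ) : StoneCech Γ :=
  stoneCechExtend (continuous_of_discreteTopology (f := fun s : Γ => stoneCechUnit (s * t))) x

/-- A function on the transformation groupoid `βΓ ⋊ Γ` is positive definite. -/
def GroupoidPosDef {Γ : Type*} [Group Γ] [TopologicalSpace Γ] [DiscreteTopology Γ]
    (φ : StoneCech Γ → Γ → ℂ) : Prop :=
  ∀ (x : StoneCech Γ) (n : ℕ) (s : Fin n → Γ) (z : Fin n → ℂ),
    0 ≤ ∑ i, ∑ j, conj (z i) * φ (rightTranslate (s i) x) ((s i)⁻¹ * s j) * z j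

/-- A function on the transformation groupoid `βΓ ⋊ Γ` is of negative type. -/
def GroupoidNegType {Γ : Type*} [Group Γ] [TopologicalSpace Γ] [DiscreteTopology Γ]
    (ψ : StoneCech Γ → Γ → ℝ) : Prop :=
  (∀ x : StoneCech Γ, ψ x 1 = 0) ∧
    (∀ (x : StoneCech Γ) (s t : Γ),
      ψ (rightTranslate s x) (s⁻¹ * t) = ψ (rightTranslate t x) (t⁻¹ * s)) ∧
    ∀ (x : StoneCech Γ) (n : ℕ) (s : Fin n → Γ) (a : Fin n → ℝ),
      (∑ j, a j) = 0 →
        (∑ i, ∑ j, a i * ψ (rightTranslate (s i) x) ((s i)⁻¹ * s j) * a j) ≤ 0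

/-- A function on `βΓ ⋊ Γ` is proper: it is large off `βΓ × F` for finite sets `F ⊆ Γ`. -/
def GroupoidProper {Γ : Type*} [Group Γ] [TopologicalSpace Γ] [DiscreteTopology Γ]
    (ψ : StoneCech Γ → Γ → ℝ) : Prop :=
  ∀ C > 0, ∃ F : Finset Γ, ∀ (x : StoneCech Γ) (t : Γ), t ∉ F → C < |ψ x t|

/-- Membership in `C₀(βΓ ⋊ Γ)`: continuous in the `βΓ`-variable, and uniformly small off
`βΓ × F` for finite sets `F ⊆ Γ`. -/
def MemC0Groupoid {Γ : Type*} [Group Γ] [TopologicalSpace Γ] [DiscreteTopology Γ]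
    (φ : StoneCech Γ → Γ → ℂ) : Prop :=
  (∀ t : Γ, Continuous fun x => φ x t) ∧
    ∀ ε > 0, ∃ F : Finset Γ, ∀ (x : StoneCech Γ) (t : Γ), t ∉ F → ‖φ x t‖ < ε

/-- A sequence in `C₀(βΓ ⋊ Γ)` is an approximate unit for `C₀(βΓ ⋊ Γ)`. -/
def GroupoidApproxUnit {Γ : Type*} [Group Γ] [TopologicalSpace Γ] [DiscreteTopology Γ]
    (u : ℕ → StoneCech Γ → Γ → ℂ) : Prop :=
  (∀ n, MemC0Groupoid (u n)) ∧
    ∀ φ, MemC0Groupoid φ → ∀ ε > 0, ∃ N, ∀ n ≥ N, ∀ (x : StoneCech Γ) (t : Γ),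
      ‖u n x t * φ x t - φ x t‖ < ε
theorem IsPositiveDefinite.comp {X Y : Type*} {f : X → X → ℂ} (hf : IsPositiveDefinite f)
    (g : Y → X) : IsPositiveDefinite fun y y' => f (g y) (g y') :=
  fun n y z => hf n (g ∘ y) z

section StoneCech

variable {Γ : Type*} [Group Γ] [TopologicalSpace Γ] [DiscreteTopology Γ]

theorem rightTranslate_stoneCechUnit (t a : Γ) :
    rightTranslate t (stoneCechUnit a) = stoneCechUnit (a * t) :=
  congrFun (stoneCechExtend_extends _) a

theorem continuous_rightTranslate (t : Γ) : Continuous (rightTranslate t) :=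
  continuous_stoneCechExtend _

theorem groupoidPosDef_of_stoneCechUnit {F : StoneCech Γ → Γ → ℂ}
    (hFcont : ∀ t : Γ, Continuous fun x => F x t)
    (hunit : ∀ (a : Γ) (n : ℕ) (s : Fin n → Γ) (z : Fin n → ℂ),
      0 ≤ ∑ i, ∑ j, conj (z i) * F (stoneCechUnit (a * s i)) ((s i)⁻¹ * s j) * z j) :
    GroupoidPosDef F := by
  intro x n s z
  have hsum : Continuous fun x : StoneCech Γ =>
      ∑ i, ∑ j, conj (z i) * F (rightTranslate (s i) x) ((s i)⁻¹ * s j) * z j := by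
    refine continuous_finsetSum _ fun i _ => continuous_finsetSum _ fun j _ => ?_
    exact (continuous_const.mul ((hFcont _).comp (continuous_rightTranslate _))).mul
      continuous_const
  refine denseRange_stoneCechUnit.induction_on x (isClosed_le continuous_const hsum) fun a => ?_
  simpa only [rightTranslate_stoneCechUnit] using hunit a n s z

end StoneCech

theorem extension_posdef_of_posdef_general {Γ : Type*} [Group Γ]
    [TopologicalSpace Γ] [DiscreteTopology Γ]
    (f : Γ → Γ → ℂ)
    (F : StoneCech Γ → Γ → ℂ)
    (hFcont : ∀ t : Γ, Continuous fun x => F x t)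
    (hFext : ∀ s t : Γ, F (stoneCechUnit s) t = f s (s * t))
    (hf : IsPositiveDefinite f) :
    GroupoidPosDef F := by
  refine groupoidPosDef_of_stoneCechUnit hFcont fun a n s z => ?_
  simpa only [hFext, mul_assoc, mul_inv_cancel_left] using (hf.comp (a * ·)) n s z

theorem extension_posdef_of_posdef {Γ : Type*} [Group Γ]
    [TopologicalSpace Γ] [DiscreteTopology Γ]
    (f : Γ → Γ → ℂ) (hb : ∀ t : Γ, ∃ M, ∀ s : Γ, ‖f s (s * t)‖ ≤ M)
    (F : StoneCech Γ → Γ → ℂ)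
    (hFcont : ∀ t : Γ, Continuous fun x => F x t)
    (hFext : ∀ s t : Γ, F (stoneCechUnit s) t = f s (s * t))
    (hf : IsPositiveDefinite f) :
    GroupoidPosDef F :=
  extension_posdef_of_posdef_general f F hFcont hFext hf
end
end
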